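/- arXiv:2003.11086 — 3 statements merged into one kernel-verified Lean document; each statement's English description precedes it below -/
import Mathlib

section
/- Let m ≥ 1 and d be natural numbers, and let a, b : Fin d → ℕ satisfy a(i) ≤ b(i) ≤ 2^m for every i. Then the box B = {x : Fin d → ℕ | ∀ i, a(i) ≤ x(i) < b(i)} can be written as the union of a pairwise disjoint family of at most (2m)^d dyadic boxes of the grid {0, 1, ..., 2^m − 1}^d. -/
/-!
In one dimension, `[a, b) ⊆ [0, 2^(m+1))` splits as `[a, 2c) ∪ [2c, 2e) ∪ [2e, b)` with
`c = ⌈a / 2⌉`, `e = ⌊b / 2⌋`: the outer parts are empty or single points, and the middle part is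
`[c, e) ⊆ [0, 2^m)` with every dyadic interval doubled. Induction on `m` gives a disjoint dyadic
decomposition into at most `2m` intervals, and the product of `d` such decompositions is a
disjoint decomposition of the box into at most `(2m)^d` dyadic boxes.
-/

/-- The dyadic box of the grid `{0, 1, ..., 2^m - 1}^d` determined, in each coordinate `i`,
by a level `(p i).1` and an index `(p i).2`: the product over `i` of the dyadic intervals
`{(p i).2 · 2^(p i).1, ..., ((p i).2 + 1) · 2^(p i).1 - 1}`. -/
def dyadicBox {d : ℕ} (p : Fin d → ℕ × ℕ) : Set (Fin d → ℕ) :=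
  {x | ∀ i, (p i).2 * 2 ^ (p i).1 ≤ x i ∧ x i < ((p i).2 + 1) * 2 ^ (p i).1}

open Set Function

def dyadicInterval (p : ℕ × ℕ) : Set ℕ := Ico (p.2 * 2 ^ p.1) ((p.2 + 1) * 2 ^ p.1)

theorem dyadicBox_eq_pi {d : ℕ} (p : Fin d → ℕ × ℕ) :
    dyadicBox p = univ.pi fun i => dyadicInterval (p i) := by
  ext x
  simp [dyadicBox, dyadicInterval]

theorem dyadicInterval_zero_level (x : ℕ) : dyadicInterval (0, x) = {x} := by
  ext y
  simp only [dyadicInterval, pow_zero, mul_one, mem_Ico, mem_singleton_iff]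
  omega

theorem dyadicInterval_succ_level (ℓ j : ℕ) :
    dyadicInterval (ℓ + 1, j) = (· / 2) ⁻¹' dyadicInterval (ℓ, j) := by
  ext x
  simp only [dyadicInterval, mem_Ico, mem_preimage, Nat.le_div_iff_mul_le two_pos,
    Nat.div_lt_iff_lt_mul two_pos, pow_succ, mul_assoc]

theorem preimage_div_two_Ico (c e : ℕ) : (· / 2) ⁻¹' Ico c e = Ico (2 * c) (2 * e) := by
  ext x
  simp only [mem_preimage, mem_Ico]
  omega

theorem level_le_and_index_lt_of_dyadicInterval_subset {m : ℕ} {p : ℕ × ℕ}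
    (h : dyadicInterval p ⊆ Iio (2 ^ m)) : p.1 ≤ m ∧ p.2 < 2 ^ (m - p.1) := by
  have hpos : 0 < 2 ^ p.1 := by positivity
  have hend : (p.2 + 1) * 2 ^ p.1 ≤ 2 ^ m := by
    have hlast : p.2 * 2 ^ p.1 + (2 ^ p.1 - 1) ∈ dyadicInterval p := by
      simp only [dyadicInterval, mem_Ico, add_one_mul]
      omega
    have := h hlast
    rw [mem_Iio] at this
    rw [add_one_mul]
    omega
  have hlevel : p.1 ≤ m :=
    (Nat.pow_le_pow_iff_right one_lt_two).1 ((Nat.le_mul_of_pos_left _ p.2.succ_pos).trans hend)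
  refine ⟨hlevel, Nat.lt_of_succ_le (Nat.le_of_mul_le_mul_right ?_ hpos)⟩
  rwa [← pow_add, Nat.sub_add_cancel hlevel]

def succLevel : ℕ × ℕ ↪ ℕ × ℕ := Embedding.prodMap ⟨Nat.succ, Nat.succ_injective⟩ (Embedding.refl ℕ)

def IsDyadicPartition (s : Finset (ℕ × ℕ)) (S : Set ℕ) : Prop :=
  (s : Set (ℕ × ℕ)).PairwiseDisjoint dyadicInterval ∧ ⋃ p ∈ s, dyadicInterval p = S

namespace IsDyadicPartition

variable {s t : Finset (ℕ × ℕ)} {S T : Set ℕ}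

theorem subset (h : IsDyadicPartition s S) {p : ℕ × ℕ} (hp : p ∈ s) : dyadicInterval p ⊆ S :=
  h.2 ▸ subset_biUnion_of_mem (u := dyadicInterval) hp

theorem union (hs : IsDyadicPartition s S) (ht : IsDyadicPartition t T) (hST : Disjoint S T) :
    IsDyadicPartition (s ∪ t) (S ∪ T) := by
  refine ⟨?_, by rw [Finset.set_biUnion_union, hs.2, ht.2]⟩
  rw [Finset.coe_union]
  exact hs.1.union ht.1 fun p hp q hq _ => hST.mono (hs.subset hp) (ht.subset hq)

theorem map_succLevel (h : IsDyadicPartition s S) :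
    IsDyadicPartition (s.map succLevel) ((· / 2) ⁻¹' S) := by
  have hlift (p : ℕ × ℕ) : dyadicInterval (succLevel p) = (· / 2) ⁻¹' dyadicInterval p :=
    dyadicInterval_succ_level p.1 p.2
  refine ⟨?_, ?_⟩
  · rw [Finset.coe_map]
    rintro _ ⟨p, hp, rfl⟩ _ ⟨q, hq, rfl⟩ hne
    rw [onFun, hlift, hlift]
    exact (h.1 hp hq (ne_of_apply_ne _ hne)).preimage _
  · simp only [Finset.map_eq_image, Finset.set_biUnion_finset_image, hlift, ← preimage_iUnion₂, h.2]

end IsDyadicPartition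

theorem isDyadicPartition_Ico_singletons (a b : ℕ) :
    IsDyadicPartition ((Finset.Ico a b).map (Embedding.sectR 0 ℕ)) (Ico a b) := by
  refine ⟨?_, ?_⟩
  · rw [Finset.coe_map]
    rintro _ ⟨x, -, rfl⟩ _ ⟨y, -, rfl⟩ hne
    simpa [onFun, dyadicInterval_zero_level] using hne
  · ext x
    simp [dyadicInterval_zero_level]

theorem exists_isDyadicPartition_Ico (m a b : ℕ) (hb : b ≤ 2 ^ m) :
    ∃ s, IsDyadicPartition s (Ico a b) ∧ (s.card ≤ 2 * m ∨ a = 0 ∧ s.card ≤ 1) := by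
  -- `[0, 1)` needs one interval at `m = 0`, hence the second alternative; in the step it forces
  -- `a = 0`, so the left piece is empty and the bound `2 * m` holds from `m = 1` on.
  induction m generalizing a b with
  | zero =>
    refine ⟨_, isDyadicPartition_Ico_singletons a b, ?_⟩
    rw [Finset.card_map, Nat.card_Ico]
    omega
  | succ m ih =>
    rcases le_or_gt b a with hba | hab
    · refine ⟨_, isDyadicPartition_Ico_singletons a b, Or.inl ?_⟩
      rw [Finset.card_map, Nat.card_Ico]
      omega
    set c := (a + 1) / 2
    set e := b / 2
    obtain ⟨s, hs, hcard⟩ := ih c e (by rw [pow_succ] at hb; omega)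
    have hmid : IsDyadicPartition (s.map succLevel) (Ico (2 * c) (2 * e)) := by
      simpa only [preimage_div_two_Ico] using hs.map_succLevel
    have hleft := (isDyadicPartition_Ico_singletons a (2 * c)).union hmid Ico_disjoint_Ico_same
    rw [Ico_union_Ico_eq_Ico (by omega) (by omega)] at hleft
    have hall := hleft.union (isDyadicPartition_Ico_singletons (2 * e) b) Ico_disjoint_Ico_same
    rw [Ico_union_Ico_eq_Ico (by omega) (by omega)] at hall
    refine ⟨_, hall, Or.inl ?_⟩
    grw [Finset.card_union_le, Finset.card_union_le]
    simp only [Finset.card_map, Nat.card_Ico]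
    omega

theorem IsDyadicPartition.pi {d : ℕ} {s : Fin d → Finset (ℕ × ℕ)} {S : Fin d → Set ℕ}
    (h : ∀ i, IsDyadicPartition (s i) (S i)) :
    (Fintype.piFinset s : Set (Fin d → ℕ × ℕ)).PairwiseDisjoint dyadicBox ∧
      ⋃ p ∈ Fintype.piFinset s, dyadicBox p = univ.pi S := by
  rw [funext dyadicBox_eq_pi]
  simp only [← Finset.mem_coe, Fintype.coe_piFinset]
  refine ⟨pairwiseDisjoint_pi fun i => (h i).1, ?_⟩
  rw [biUnion_univ_pi]
  simp only [Finset.mem_coe, (h _).2]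

theorem box_eq_disjoint_union_of_dyadic_boxes_general
    (m d : ℕ) (hm : 1 ≤ m) (a b : Fin d → ℕ)
    (hb : ∀ i, b i ≤ 2 ^ m) :
    ∃ t : Finset (Fin d → ℕ × ℕ),
      t.card ≤ (2 * m) ^ d ∧
      (∀ p ∈ t, ∀ i, (p i).1 ≤ m ∧ (p i).2 < 2 ^ (m - (p i).1)) ∧
      (t : Set (Fin d → ℕ × ℕ)).Pairwise (fun p q => Disjoint (dyadicBox p) (dyadicBox q)) ∧
      (⋃ p ∈ t, dyadicBox p) = {x : Fin d → ℕ | ∀ i, a i ≤ x i ∧ x i < b i} := by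
  have hpart (i : Fin d) : ∃ s, IsDyadicPartition s (Ico (a i) (b i)) ∧ s.card ≤ 2 * m := by
    obtain ⟨s, hs, hcard⟩ := exists_isDyadicPartition_Ico m (a i) (b i) (hb i)
    exact ⟨s, hs, by omega⟩
  choose s hs hcard using hpart
  obtain ⟨hdisj, hunion⟩ := IsDyadicPartition.pi hs
  refine ⟨Fintype.piFinset s, ?_, fun p hp i => ?_, hdisj, ?_⟩
  · rw [Fintype.card_piFinset]
    simpa using Finset.prod_le_pow_card Finset.univ _ _ fun i _ => hcard i
  · refine level_le_and_index_lt_of_dyadicInterval_subset fun x hx => ?_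
    exact ((hs i).subset (Fintype.mem_piFinset.1 hp i) hx).2.trans_le (hb i)
  · rw [hunion]
    ext x
    simp

/-- Any axis-aligned box `{x | ∀ i, a i ≤ x i < b i}` with `a i ≤ b i ≤ 2^m` for all `i`
is the union of a pairwise disjoint family of at most `(2m)^d` dyadic boxes of the grid
`{0, 1, ..., 2^m - 1}^d`. -/
theorem box_eq_disjoint_union_of_dyadic_boxes
    (m d : ℕ) (hm : 1 ≤ m) (a b : Fin d → ℕ)
    (hab : ∀ i, a i ≤ b i) (hb : ∀ i, b i ≤ 2 ^ m) :
    ∃ t : Finset (Fin d → ℕ × ℕ),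
      t.card ≤ (2 * m) ^ d ∧
      (∀ p ∈ t, ∀ i, (p i).1 ≤ m ∧ (p i).2 < 2 ^ (m - (p i).1)) ∧
      (t : Set (Fin d → ℕ × ℕ)).Pairwise (fun p q => Disjoint (dyadicBox p) (dyadicBox q)) ∧
      (⋃ p ∈ t, dyadicBox p) = {x : Fin d → ℕ | ∀ i, a i ≤ x i ∧ x i < b i} :=
  box_eq_disjoint_union_of_dyadic_boxes_general m d hm a b hb
end

section
/- There exists a universal constant C > 0 with the following property. Let (Ω, P) be a probability space, let σ > 0, and let ε₁, ..., εₙ : Ω → ℝ be independent random variables, each sub-Gaussian with variance proxy σ²; let ε denote the random vector (ε₁, ..., εₙ) in ℝⁿ with the standard inner product. Let S₁, ..., S_M be linear subspaces of ℝⁿ, each of dimension at most r, and let δ ∈ (0, 1). Then with probability at least 1 − δ, for every j ∈ {1, ..., M} and every nonzero v ∈ S_j, |⟨ε, v⟩| ≤ C·σ·√(r + log(M/δ))·‖v‖. -/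
/-!
For a subspace `K`, every `v ∈ K` satisfies `|⟪ε, v⟫| ≤ ‖P_K ε‖ ‖v‖`, and the projection `P_K ε`
is again sub-Gaussian in every direction of `K`. Writing `exp (‖y‖² / 4σ²)` as the average of
`exp ⟪y / (σ√2), g⟫` over a standard Gaussian vector `g` of `K` and exchanging the two expectations
gives `E exp (‖P_K ε‖² / 4σ²) ≤ E exp (‖g‖² / 4) = √2 ^ dim K`. Markov's inequality then bounds
`P (‖P_K ε‖ ≥ 2σ √(r + log (M/δ)))` by `δ / M`, and a union bound over the `M` subspaces gives the
theorem with `C = 2`.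
-/

open MeasureTheory ProbabilityTheory RealInnerProductSpace

/-- A real random variable `X` is sub-Gaussian with variance proxy `σ²` if it is centered
and its moment generating function satisfies `E[exp(t X)] ≤ exp(t² σ² / 2)` for all `t`. -/
def IsSubGaussian {Ω : Type*} [MeasurableSpace Ω] (P : Measure Ω) (σ : ℝ) (X : Ω → ℝ) : Prop :=
  Integrable X P ∧ (∫ ω, X ω ∂P) = 0 ∧
    ∀ t : ℝ, Integrable (fun ω => Real.exp (t * X ω)) P ∧
      (∫ ω, Real.exp (t * X ω) ∂P) ≤ Real.exp (t ^ 2 * σ ^ 2 / 2)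

open Real
open scoped NNReal ENNReal

lemma lintegral_exp_eq_mgf_one {Ω : Type*} [MeasurableSpace Ω] {μ : Measure Ω} {X : Ω → ℝ}
    (h : Integrable (fun ω => exp (X ω)) μ) :
    ∫⁻ ω, ENNReal.ofReal (exp (X ω)) ∂μ = ENNReal.ofReal (mgf X μ 1) := by
  simp only [mgf, one_mul]
  exact (ofReal_integral_eq_lintegral_ofReal h (ae_of_all _ fun _ => (exp_pos _).le)).symm

lemma sqrt_two_pow_le_exp (n : ℕ) : √2 ^ n ≤ exp n := by
  have h2 : √2 ≤ exp 1 := sqrt_le_iff.2 ⟨(exp_pos 1).le, by nlinarith [add_one_le_exp (1 : ℝ)]⟩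
  rw [← exp_one_pow]
  gcongr

lemma lintegral_exp_sq_div_four_gaussianReal :
    ∫⁻ x, ENNReal.ofReal (exp (x ^ 2 / 4)) ∂gaussianReal 0 1 = ENNReal.ofReal √2 := by
  have hdens : ∀ x, gaussianPDFReal 0 1 x * exp (x ^ 2 / 4) =
      (√(2 * π))⁻¹ * exp (-(1 / 4) * x ^ 2) := by
    intro x
    simp only [gaussianPDFReal, NNReal.coe_one, mul_one, sub_zero]
    rw [mul_assoc, ← exp_add]
    ring_nf
  rw [gaussianReal_of_var_ne_zero _ one_ne_zero,
    lintegral_withDensity_eq_lintegral_mul _ (measurable_gaussianPDF _ _) (by fun_prop)]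
  simp only [Pi.mul_apply, gaussianPDF, ← ENNReal.ofReal_mul (gaussianPDFReal_nonneg _ _ _), hdens]
  rw [← ofReal_integral_eq_lintegral_ofReal
    ((integrable_exp_neg_mul_sq (by norm_num)).const_mul _) (ae_of_all _ fun _ => by positivity),
    integral_const_mul, integral_gaussian, ← sqrt_inv, ← sqrt_mul (by positivity)]
  congr 2
  field_simp
  ring

section StdGaussian

variable {E : Type*} [NormedAddCommGroup E] [InnerProductSpace ℝ E] [FiniteDimensional ℝ E]
  [MeasurableSpace E] [BorelSpace E]

lemma mgf_inner_stdGaussian (a : E) (t : ℝ) :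
    mgf (fun g => ⟪a, g⟫) (stdGaussian E) t = exp (‖a‖ ^ 2 * t ^ 2 / 2) := by
  have hmap := IsGaussian.map_eq_gaussianReal (μ := stdGaussian E) (innerSL ℝ a)
  rw [integral_strongDual_stdGaussian, variance_dual_stdGaussian, innerSL_apply_norm] at hmap
  rw [show (fun g => ⟪a, g⟫) = innerSL ℝ a from rfl, mgf_gaussianReal hmap,
    coe_toNNReal _ (sq_nonneg _), zero_mul, zero_add]

lemma lintegral_exp_inner_stdGaussian (a : E) :
    ∫⁻ g, ENNReal.ofReal (exp ⟪a, g⟫) ∂stdGaussian E = ENNReal.ofReal (exp (‖a‖ ^ 2 / 2)) := by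
  have hint : Integrable (fun g => exp (1 * ⟪a, g⟫)) (stdGaussian E) :=
    mgf_pos_iff.1 (by rw [mgf_inner_stdGaussian]; positivity)
  simp only [one_mul] at hint
  rw [lintegral_exp_eq_mgf_one hint, mgf_inner_stdGaussian, one_pow, mul_one]

lemma lintegral_exp_norm_sq_div_four_stdGaussian :
    ∫⁻ g, ENNReal.ofReal (exp (‖g‖ ^ 2 / 4)) ∂stdGaussian E =
      ENNReal.ofReal (√2 ^ Module.finrank ℝ E) := by
  have hnorm : ∀ x : Fin (Module.finrank ℝ E) → ℝ,
      ‖∑ i, x i • stdOrthonormalBasis ℝ E i‖ ^ 2 = ∑ i, x i ^ 2 := by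
    intro x
    rw [(stdOrthonormalBasis ℝ E).sum_repr_symm (WithLp.toLp 2 x), LinearIsometryEquiv.norm_map,
      EuclideanSpace.real_norm_sq_eq]
  have h1 := lintegral_exp_sq_div_four_gaussianReal
  have hnonneg : 0 ≤ᵐ[gaussianReal 0 1] fun x => exp (x ^ 2 / 4) :=
    ae_of_all _ fun _ => (exp_pos _).le
  have hint : Integrable (fun x => exp (x ^ 2 / 4)) (gaussianReal 0 1) :=
    ⟨by fun_prop, (hasFiniteIntegral_iff_ofReal hnonneg).2 (h1 ▸ ENNReal.ofReal_lt_top)⟩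
  rw [stdGaussian, lintegral_map (by fun_prop) (by fun_prop)]
  simp_rw [hnorm, Finset.sum_div, exp_sum]
  rw [← ofReal_integral_eq_lintegral_ofReal
      (Integrable.fintype_prod (f := fun _ x => exp (x ^ 2 / 4)) fun _ => hint)
      (ae_of_all _ fun _ => by positivity),
    integral_fintype_prod_eq_pow (fun x => exp (x ^ 2 / 4)),
    integral_eq_lintegral_of_nonneg_ae hnonneg (by fun_prop), h1,
    ENNReal.toReal_ofReal (sqrt_nonneg _), Fintype.card_fin]

end StdGaussian

section SubgaussianVector

variable {Ω E : Type*} [MeasurableSpace Ω] [NormedAddCommGroup E] [InnerProductSpace ℝ E]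
  {P : Measure Ω} {c : ℝ≥0}

lemma IsSubGaussian.hasSubgaussianMGF {σ : ℝ} {X : Ω → ℝ} (h : IsSubGaussian P σ X) :
    HasSubgaussianMGF X ⟨σ ^ 2, sq_nonneg σ⟩ P :=
  ⟨fun t => (h.2.2 t).1, fun t => (h.2.2 t).2.trans_eq (by rw [mul_comm (t ^ 2)]; rfl)⟩

lemma ProbabilityTheory.HasSubgaussianMGF.lintegral_exp_le {X : Ω → ℝ}
    (h : HasSubgaussianMGF X c P) :
    ∫⁻ ω, ENNReal.ofReal (exp (X ω)) ∂P ≤ ENNReal.ofReal (exp (c / 2)) := by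
  rw [lintegral_exp_eq_mgf_one (by simpa using h.integrable_exp_mul 1)]
  exact ENNReal.ofReal_le_ofReal ((h.mgf_le 1).trans_eq (by rw [one_pow, mul_one]))

def IsSubgaussianVector (ξ : Ω → E) (c : ℝ≥0) (P : Measure Ω) : Prop :=
  ∀ u : E, HasSubgaussianMGF (fun ω => ⟪ξ ω, u⟫) (‖u‖₊ ^ 2 * c) P

lemma isSubgaussianVector_toLp_of_iIndepFun {ι : Type*} [Fintype ι] {ε : ι → Ω → ℝ}
    (hind : iIndepFun ε P) (hε : ∀ i, HasSubgaussianMGF (ε i) c P) :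
    IsSubgaussianVector (fun ω => WithLp.toLp 2 (fun i => ε i ω) : Ω → EuclideanSpace ℝ ι) c P := by
  intro u
  have hsum := HasSubgaussianMGF.sum_of_iIndepFun (s := Finset.univ)
    (hind.comp (fun i x => u i * x) fun i => measurable_const_mul _)
    fun i _ => (hε i).const_mul (u i)
  convert hsum using 1
  · ext ω
    simp [PiLp.inner_apply, mul_comm]
  · apply NNReal.eq
    calc ((‖u‖₊ ^ 2 * c : ℝ≥0) : ℝ) = ∑ i, u i ^ 2 * (c : ℝ) := by
          push_cast
          rw [← Finset.sum_mul, EuclideanSpace.real_norm_sq_eq]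
      _ = _ := by rw [NNReal.coe_sum]; rfl

lemma IsSubgaussianVector.orthogonalProjectionOnto {ξ : Ω → E} (hξ : IsSubgaussianVector ξ c P)
    (K : Submodule ℝ E) [K.HasOrthogonalProjection] :
    IsSubgaussianVector (fun ω => K.orthogonalProjectionOnto (ξ ω)) c P := fun u =>
  (hξ u).congr (ae_of_all _ fun _ => (K.inner_orthogonalProjectionOnto_eq_of_mem_right u _).symm)

variable [MeasurableSpace E] [BorelSpace E] [FiniteDimensional ℝ E] [IsProbabilityMeasure P]
  {Y : Ω → E}

lemma IsSubgaussianVector.lintegral_exp_norm_sq_le (hY : IsSubgaussianVector Y c P)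
    (hmeas : Measurable Y) (hc : 0 < c) :
    ∫⁻ ω, ENNReal.ofReal (exp (‖Y ω‖ ^ 2 / (4 * c))) ∂P ≤
      ENNReal.ofReal (√2 ^ Module.finrank ℝ E) := by
  set t : ℝ := (√(2 * c))⁻¹
  have ht : t ^ 2 = (2 * (c : ℝ))⁻¹ := by rw [inv_pow, sq_sqrt (by positivity)]
  have hmix : ∀ ω, ENNReal.ofReal (exp (‖Y ω‖ ^ 2 / (4 * c))) =
      ∫⁻ g, ENNReal.ofReal (exp ⟪Y ω, t • g⟫) ∂stdGaussian E := by
    intro ω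
    simp_rw [real_inner_smul_right, ← real_inner_smul_left]
    rw [lintegral_exp_inner_stdGaussian, norm_smul, mul_pow, norm_eq_abs, sq_abs, ht]
    congr 2
    field_simp
    ring
  have hmgf : ∀ g, ∫⁻ ω, ENNReal.ofReal (exp ⟪Y ω, t • g⟫) ∂P ≤
      ENNReal.ofReal (exp (‖g‖ ^ 2 / 4)) := by
    intro g
    refine (hY (t • g)).lintegral_exp_le.trans_eq ?_
    push_cast
    rw [norm_smul, mul_pow, norm_eq_abs, sq_abs, ht]
    congr 2
    field_simp
    ring
  calc ∫⁻ ω, ENNReal.ofReal (exp (‖Y ω‖ ^ 2 / (4 * c))) ∂P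
      = ∫⁻ ω, ∫⁻ g, ENNReal.ofReal (exp ⟪Y ω, t • g⟫) ∂stdGaussian E ∂P := lintegral_congr hmix
    _ = ∫⁻ g, ∫⁻ ω, ENNReal.ofReal (exp ⟪Y ω, t • g⟫) ∂P ∂stdGaussian E :=
      lintegral_lintegral_swap (by fun_prop)
    _ ≤ ∫⁻ g, ENNReal.ofReal (exp (‖g‖ ^ 2 / 4)) ∂stdGaussian E := lintegral_mono hmgf
    _ = ENNReal.ofReal (√2 ^ Module.finrank ℝ E) := lintegral_exp_norm_sq_div_four_stdGaussian

lemma IsSubgaussianVector.measure_le_norm_le (hY : IsSubgaussianVector Y c P)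
    (hmeas : Measurable Y) (hc : 0 < c) {s : ℝ} (hs : 0 ≤ s) :
    P {ω | s ≤ ‖Y ω‖} ≤ ENNReal.ofReal (√2 ^ Module.finrank ℝ E * exp (-(s ^ 2 / (4 * c)))) := by
  set a := s ^ 2 / (4 * c)
  have hsub : {ω | s ≤ ‖Y ω‖} ⊆
      {ω | ENNReal.ofReal (exp a) ≤ ENNReal.ofReal (exp (‖Y ω‖ ^ 2 / (4 * c)))} := by
    intro ω hω
    have hsq : s ^ 2 ≤ ‖Y ω‖ ^ 2 := pow_le_pow_left₀ hs hω 2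
    exact ENNReal.ofReal_le_ofReal (exp_le_exp.2 (div_le_div_of_nonneg_right hsq (by positivity)))
  have hmarkov : ENNReal.ofReal (exp a) * P {ω | s ≤ ‖Y ω‖} ≤
      ENNReal.ofReal (√2 ^ Module.finrank ℝ E) :=
    (mul_le_mul_right (measure_mono hsub) _).trans
      ((mul_meas_ge_le_lintegral₀ (by fun_prop) _).trans (hY.lintegral_exp_norm_sq_le hmeas hc))
  calc P {ω | s ≤ ‖Y ω‖}
      = ENNReal.ofReal (exp (-a)) * (ENNReal.ofReal (exp a) * P {ω | s ≤ ‖Y ω‖}) := by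
        rw [← mul_assoc, ← ENNReal.ofReal_mul (exp_pos _).le, ← exp_add, neg_add_cancel, exp_zero,
          ENNReal.ofReal_one, one_mul]
    _ ≤ ENNReal.ofReal (exp (-a)) * ENNReal.ofReal (√2 ^ Module.finrank ℝ E) := by gcongr
    _ = ENNReal.ofReal (√2 ^ Module.finrank ℝ E * exp (-a)) := by
        rw [← ENNReal.ofReal_mul (exp_pos _).le, mul_comm]

end SubgaussianVector

theorem IsSubgaussianVector.measure_le_norm_orthogonalProjectionOnto_le {Ω E : Type*}
    [MeasurableSpace Ω] [NormedAddCommGroup E] [InnerProductSpace ℝ E] [MeasurableSpace E]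
    [BorelSpace E] {P : Measure Ω} [IsProbabilityMeasure P] {c : ℝ≥0} {ξ : Ω → E}
    (hξ : IsSubgaussianVector ξ c P) (hmeas : Measurable ξ) (hc : 0 < c) (K : Submodule ℝ E)
    [FiniteDimensional ℝ K] {r : ℕ} (hK : Module.finrank ℝ K ≤ r) {η : ℝ} (hη : 0 < η)
    (hη1 : η ≤ 1) :
    P {ω | 2 * √c * √(r + log η⁻¹) ≤ ‖K.orthogonalProjectionOnto (ξ ω)‖} ≤ ENNReal.ofReal η := by
  have hL : 0 ≤ log η⁻¹ := log_nonneg (one_le_inv_iff₀.2 ⟨hη, hη1⟩)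
  have hs : (2 * √c * √(r + log η⁻¹)) ^ 2 / (4 * c) = r + log η⁻¹ := by
    rw [mul_pow, mul_pow, sq_sqrt c.coe_nonneg, sq_sqrt (by positivity)]
    field_simp
    ring
  refine ((hξ.orthogonalProjectionOnto K).measure_le_norm_le (by fun_prop) hc
    (by positivity)).trans ?_
  rw [hs]
  refine ENNReal.ofReal_le_ofReal ?_
  calc √2 ^ Module.finrank ℝ K * exp (-(r + log η⁻¹))
      ≤ exp r * exp (-(r + log η⁻¹)) := by
        gcongr
        exact (pow_le_pow_right₀ (one_le_sqrt.2 one_le_two) hK).trans (sqrt_two_pow_le_exp r)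
    _ = exp (-log η⁻¹) := by rw [← exp_add]; ring_nf
    _ = η := by rw [log_inv, neg_neg, exp_log hη]

theorem IsSubgaussianVector.measure_forall_abs_inner_le {Ω E : Type*} [MeasurableSpace Ω]
    [NormedAddCommGroup E] [InnerProductSpace ℝ E] [MeasurableSpace E] [BorelSpace E]
    {P : Measure Ω} [IsProbabilityMeasure P] {c : ℝ≥0} {ξ : Ω → E}
    (hξ : IsSubgaussianVector ξ c P) (hmeas : Measurable ξ) (hc : 0 < c) {M r : ℕ}
    (S : Fin M → Submodule ℝ E) [∀ j, FiniteDimensional ℝ (S j)]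
    (hS : ∀ j, Module.finrank ℝ (S j) ≤ r) {δ : ℝ} (hδ : 0 < δ) (hδ1 : δ ≤ 1) :
    ENNReal.ofReal (1 - δ) ≤
      P {ω | ∀ j, ∀ v ∈ S j, |⟪ξ ω, v⟫| ≤ 2 * √c * √(r + log (M / δ)) * ‖v‖} := by
  set s := 2 * √c * √(r + log (M / δ))
  set bad : Fin M → Set Ω := fun j => {ω | s ≤ ‖(S j).orthogonalProjectionOnto (ξ ω)‖}
  have hbad : ∀ j, P (bad j) ≤ ENNReal.ofReal δ / M := by
    intro j
    have hM : (1 : ℝ) ≤ M := Nat.one_le_cast.2 j.pos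
    have h := hξ.measure_le_norm_orthogonalProjectionOnto_le hmeas hc (S j) (hS j)
      (div_pos hδ (by positivity)) ((div_le_one (by positivity)).2 (hδ1.trans hM))
    rw [inv_div, ENNReal.ofReal_div_of_pos (by positivity), ENNReal.ofReal_natCast] at h
    exact h
  have hunion : P (⋃ j, bad j) ≤ ENNReal.ofReal δ :=
    calc P (⋃ j, bad j) ≤ ∑ j, P (bad j) := measure_iUnion_fintype_le P bad
      _ ≤ ∑ _j : Fin M, ENNReal.ofReal δ / M := Finset.sum_le_sum fun j _ => hbad j
      _ = M * (ENNReal.ofReal δ / M) := by simp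
      _ ≤ ENNReal.ofReal δ := ENNReal.mul_div_le
  have hgood : (⋃ j, bad j)ᶜ ⊆ {ω | ∀ j, ∀ v ∈ S j, |⟪ξ ω, v⟫| ≤ s * ‖v‖} := by
    intro ω hω j v hv
    simp only [Set.mem_compl_iff, Set.mem_iUnion, not_exists, Set.mem_ofPred_eq, not_le, bad] at hω
    calc |⟪ξ ω, v⟫| = |⟪(S j).orthogonalProjectionOnto (ξ ω), (⟨v, hv⟩ : S j)⟫| := by
          rw [Submodule.inner_orthogonalProjectionOnto_eq_of_mem_right]
      _ ≤ ‖(S j).orthogonalProjectionOnto (ξ ω)‖ * ‖v‖ := abs_real_inner_le_norm _ _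
      _ ≤ s * ‖v‖ := by gcongr; exact (hω j).le
  have hmeas_bad : MeasurableSet (⋃ j, bad j) :=
    MeasurableSet.iUnion fun j => measurableSet_le measurable_const (by fun_prop)
  calc ENNReal.ofReal (1 - δ) = 1 - ENNReal.ofReal δ := by
        rw [ENNReal.ofReal_sub _ hδ.le, ENNReal.ofReal_one]
    _ ≤ 1 - P (⋃ j, bad j) := tsub_le_tsub_left hunion 1
    _ = P (⋃ j, bad j)ᶜ := (prob_compl_eq_one_sub hmeas_bad).symm
    _ ≤ _ := measure_mono hgood

/-- Union-bound extension of the subspace maximal inequality: with probability `1 - δ`,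
independent `σ²`-sub-Gaussian noise has correlation at most
`O(σ√(r + log(M/δ)))·‖v‖` with every nonzero vector `v` in each of `M` subspaces of
dimension at most `r`. -/
theorem subgaussian_union_of_subspaces_correlation_bound :
    ∃ C : ℝ, 0 < C ∧
      ∀ (Ω : Type) (_ : MeasurableSpace Ω) (P : Measure Ω), IsProbabilityMeasure P →
      ∀ (n : ℕ) (σ : ℝ), 0 < σ →
      ∀ (ε : Fin n → Ω → ℝ), (∀ i, Measurable (ε i)) →
        iIndepFun ε P →
        (∀ i, IsSubGaussian P σ (ε i)) →
      ∀ (M r : ℕ) (S : Fin M → Submodule ℝ (EuclideanSpace ℝ (Fin n))),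
        (∀ j, Module.finrank ℝ ↥(S j) ≤ r) →
      ∀ δ : ℝ, δ ∈ Set.Ioo (0 : ℝ) 1 →
        ENNReal.ofReal (1 - δ) ≤
          P {ω | ∀ j, ∀ v ∈ S j, v ≠ 0 →
            |⟪(WithLp.equiv 2 (Fin n → ℝ)).symm (fun i => ε i ω), v⟫| ≤
              C * σ * Real.sqrt (r + Real.log (M / δ)) * ‖v‖} := by
  refine ⟨2, two_pos, ?_⟩
  intro Ω _ P _ n σ hσ ε hmeas hind hsub M r S hS δ hδ
  have hξ := isSubgaussianVector_toLp_of_iIndepFun hind fun i => (hsub i).hasSubgaussianMGF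
  refine (hξ.measure_forall_abs_inner_le (by fun_prop) (NNReal.coe_pos.1 (pow_pos hσ 2)) S hS
    hδ.1 hδ.2.le).trans (measure_mono fun ω hω j v hv _ => ?_)
  exact (hω j v hv).trans_eq (by congr 3; exact sqrt_sq hσ.le)
end

section
/- Let b ≥ 2 and h ≥ 1 be natural numbers. Let T be a finite set of lists over Fin b such that: every list in T has length at most h; T is closed under taking prefixes; T contains at least one nonempty list; and for every x ∈ T that has some one-element extension in T, all b of the one-element extensions of x lie in T. Call x ∈ T a leaf of T if no one-element extension of x lies in T, and call x ∈ T a terminal node of T if all b one-element extensions of x lie in T and are leaves of T. If s is the number of terminal nodes of T, then the number of leaves of T is at most b·s·(h+1). -/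
/-!
A leaf `y ++ [c]` hangs off the internal node `y`. Descending from `y` through children that
still have children must stop, since `T` is finite, at a terminal node `t`, and `y` is a prefix
of `t`. Hence every leaf is `t.take k ++ [c]` for a terminal node `t`, a depth `k < h` and a
letter `c`, so there are at most `b·s·h` leaves.
-/

def IsLeaf {b : ℕ} (T : Finset (List (Fin b))) (x : List (Fin b)) : Prop :=
  x ∈ T ∧ ∀ c : Fin b, x ++ [c] ∉ T

def IsTerminal {b : ℕ} (T : Finset (List (Fin b))) (x : List (Fin b)) : Prop :=
  x ∈ T ∧ ∀ c : Fin b, IsLeaf T (x ++ [c])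

section CompleteSubtree

variable {b : ℕ} {T : Finset (List (Fin b))}

theorem exists_isTerminal_prefix
    (hsib : ∀ x ∈ T, (∃ c : Fin b, x ++ [c] ∈ T) → ∀ c : Fin b, x ++ [c] ∈ T)
    {x : List (Fin b)} (hx : x ∈ T) (hchild : ∃ c : Fin b, x ++ [c] ∈ T) :
    ∃ t, IsTerminal T t ∧ x <+: t := by
  by_cases hgrand : ∃ c c' : Fin b, x ++ [c] ++ [c'] ∈ T
  · obtain ⟨c, c', hcc'⟩ := hgrand
    obtain ⟨t, ht, hxt⟩ := exists_isTerminal_prefix hsib (hsib x hx hchild c) ⟨c', hcc'⟩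
    exact ⟨t, ht, (x.prefix_append [c]).trans hxt⟩
  · simp only [not_exists] at hgrand
    exact ⟨x, ⟨hx, fun c => ⟨hsib x hx hchild c, hgrand c⟩⟩, x.prefix_refl⟩
termination_by T.sup List.length - x.length
decreasing_by
  have := Finset.le_sup (f := List.length) hcc'
  simp only [List.length_append, List.length_singleton] at this ⊢
  omega

theorem IsLeaf.ne_nil (hpre : ∀ x ∈ T, ∀ y : List (Fin b), y <+: x → y ∈ T)
    (hne : ∃ x ∈ T, x ≠ []) {x : List (Fin b)} (hx : IsLeaf T x) : x ≠ [] := by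
  rintro rfl
  obtain ⟨_ | ⟨c, y⟩, hy, hy_ne⟩ := hne
  · exact hy_ne rfl
  · exact hx.2 c (hpre _ hy [c] (List.prefix_cons_inj c |>.mpr y.nil_prefix))

theorem setOf_isLeaf_subset_image {h : ℕ} (hlen : ∀ x ∈ T, x.length ≤ h)
    (hpre : ∀ x ∈ T, ∀ y : List (Fin b), y <+: x → y ∈ T)
    (hne : ∃ x ∈ T, x ≠ [])
    (hsib : ∀ x ∈ T, (∃ c : Fin b, x ++ [c] ∈ T) → ∀ c : Fin b, x ++ [c] ∈ T) :
    {x | IsLeaf T x} ⊆ (fun p : List (Fin b) × ℕ × Fin b => p.1.take p.2.1 ++ [p.2.2]) ''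
      ({t | IsTerminal T t} ×ˢ Set.Iio h ×ˢ Set.univ) := by
  intro x hx
  obtain ⟨y, c, rfl⟩ : ∃ y c, x = y ++ [c] := by
    simpa using (List.eq_nil_or_concat x).resolve_left (hx.ne_nil hpre hne)
  obtain ⟨t, ht, hyt⟩ :=
    exists_isTerminal_prefix hsib (hpre _ hx.1 y (y.prefix_append _)) ⟨c, hx.1⟩
  have hy_len : y.length < h := by simpa using hlen _ hx.1
  exact ⟨(t, y.length, c), ⟨ht, hy_len, trivial⟩,
    congrArg (· ++ [c]) (List.prefix_iff_eq_take.mp hyt).symm⟩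

theorem ncard_setOf_isLeaf_le {h : ℕ} (hlen : ∀ x ∈ T, x.length ≤ h)
    (hpre : ∀ x ∈ T, ∀ y : List (Fin b), y <+: x → y ∈ T)
    (hne : ∃ x ∈ T, x ≠ [])
    (hsib : ∀ x ∈ T, (∃ c : Fin b, x ++ [c] ∈ T) → ∀ c : Fin b, x ++ [c] ∈ T) :
    {x | IsLeaf T x}.ncard ≤ b * {x | IsTerminal T x}.ncard * h := by
  have hfin : ({t | IsTerminal T t} ×ˢ Set.Iio h ×ˢ (Set.univ : Set (Fin b))).Finite :=
    (T.finite_toSet.subset fun _ (ht : IsTerminal T _) => ht.1).prod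
      ((Set.finite_Iio h).prod Set.finite_univ)
  calc {x | IsLeaf T x}.ncard
      ≤ ({t | IsTerminal T t} ×ˢ Set.Iio h ×ˢ (Set.univ : Set (Fin b))).ncard :=
        (Set.ncard_le_ncard (setOf_isLeaf_subset_image hlen hpre hne hsib)
          (hfin.image _)).trans (Set.ncard_image_le hfin)
    _ = b * {x | IsTerminal T x}.ncard * h := by
        rw [Set.ncard_prod, Set.ncard_prod, Set.ncard_Iio_nat, Set.ncard_univ, Nat.card_fin]
        ring

end CompleteSubtree

theorem leaves_le_terminal_nodes_general
    (b h : ℕ) (T : Finset (List (Fin b)))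
    (hlen : ∀ x ∈ T, x.length ≤ h)
    (hpre : ∀ x ∈ T, ∀ y : List (Fin b), y <+: x → y ∈ T)
    (hne : ∃ x ∈ T, x ≠ [])
    (hsib : ∀ x ∈ T, (∃ c : Fin b, x ++ [c] ∈ T) → ∀ c : Fin b, x ++ [c] ∈ T) :
    {x : List (Fin b) | IsLeaf T x}.ncard ≤
      b * {x : List (Fin b) | IsTerminal T x}.ncard * (h + 1) :=
  (ncard_setOf_isLeaf_le hlen hpre hne hsib).trans (Nat.mul_le_mul_left _ h.le_succ)

/-- Lemma 3.4 of the paper, combinatorial form: in a complete `b`-ary subtree of depth at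
most `h` (nodes are lists over `Fin b`, children are one-element extensions) containing at
least one nonempty list, the number of leaves is at most `b·s·(h+1)`, where `s` is the
number of terminal nodes. -/
theorem leaves_le_terminal_nodes
    (b h : ℕ) (hb : 2 ≤ b) (hh : 1 ≤ h) (T : Finset (List (Fin b)))
    (hlen : ∀ x ∈ T, x.length ≤ h)
    (hpre : ∀ x ∈ T, ∀ y : List (Fin b), y <+: x → y ∈ T)
    (hne : ∃ x ∈ T, x ≠ [])
    (hsib : ∀ x ∈ T, (∃ c : Fin b, x ++ [c] ∈ T) → ∀ c : Fin b, x ++ [c] ∈ T) :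
    {x : List (Fin b) | IsLeaf T x}.ncard ≤
      b * {x : List (Fin b) | IsTerminal T x}.ncard * (h + 1) :=
  leaves_le_terminal_nodes_general b h T hlen hpre hne hsib
end
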